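/- Let 𝒜 and ℬ be abelian categories and let i : ℬ → 𝒜 and e : 𝒜 → ℬ be exact functors with a natural isomorphism e ∘ i ≅ Id_ℬ. Then dim ℬ ≤ dim 𝒜. -/

import Mathlib

/-!
An exact functor preserves direct sums, direct summands, zero objects and short exact
sequences, so it maps `[T]ₙ` into `[F T]ₙ`. The retraction `e` is essentially surjective
(every `X` is isomorphic to `e (i X)`), and `[T]ₙ₊₁` is closed under isomorphism, so a
generator `T` with `𝒜 = [T]ₙ₊₁` yields `ℬ = [e T]ₙ₊₁`.
-/

open CategoryTheory Limits

attribute [local instance] CategoryTheory.Limits.HasFiniteBiproducts.of_hasFiniteProducts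

noncomputable section

universe v u v' u'

/-- `add 𝒰`: the class of direct summands of finite direct sums of objects of `𝒰`. -/
def addClosure {C : Type u} [Category.{v} C] [Abelian C] (S : Set C) : Set C :=
  {X | ∃ (n : ℕ) (g : Fin n → C), (∀ k, g k ∈ S) ∧
    ∃ (s : X ⟶ ⨁ g) (p : (⨁ g) ⟶ X), s ≫ p = 𝟙 X}

/-- The operation `𝒰₁ • 𝒰₂`. -/
def bulletOp {C : Type u} [Category.{v} C] [Abelian C] (S T : Set C) : Set C :=
  addClosure {X | ∃ (U V : C) (_ : U ∈ S) (_ : V ∈ T) (f : U ⟶ X) (g : X ⟶ V)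
    (w : f ≫ g = 0), (ShortComplex.mk f g w).ShortExact}

/-- `[T]_n`. -/
def bracket {C : Type u} [Category.{v} C] [Abelian C] (T : C) : ℕ → Set C
  | 0 => {X | IsZero X}
  | n + 1 => bulletOp (addClosure {T}) (bracket T n)

/-- The extension dimension of an abelian category. -/
noncomputable def extDim (C : Type u) [Category.{v} C] [Abelian C] : ℕ∞ :=
  sInf {x : ℕ∞ | ∃ m : ℕ, x = (m : ℕ∞) ∧ ∃ T : C, ∀ X : C, X ∈ bracket T (m + 1)}

section

variable {C : Type u} [Category.{v} C] [Abelian C] {D : Type u'} [Category.{v'} D] [Abelian D]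

lemma mem_addClosure_of_iso {S : Set C} {X Y : C} (φ : X ≅ Y) (hY : Y ∈ addClosure S) :
    X ∈ addClosure S := by
  obtain ⟨n, g, hg, s, p, hsp⟩ := hY
  exact ⟨n, g, hg, φ.hom ≫ s, p ≫ φ.inv, by simp [reassoc_of% hsp]⟩

lemma mem_bracket_succ_of_iso {T X Y : C} {n : ℕ} (φ : X ≅ Y) (hY : Y ∈ bracket T (n + 1)) :
    X ∈ bracket T (n + 1) :=
  mem_addClosure_of_iso φ hY

lemma CategoryTheory.Functor.map_mem_addClosure (F : C ⥤ D) [F.Additive] {S : Set C} {S' : Set D}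
    (hS : ∀ x ∈ S, F.obj x ∈ S') {X : C} (hX : X ∈ addClosure S) :
    F.obj X ∈ addClosure S' := by
  obtain ⟨n, g, hg, s, p, hsp⟩ := hX
  refine ⟨n, F.obj ∘ g, fun k => hS _ (hg k),
    F.map s ≫ (F.mapBiproduct g).hom, (F.mapBiproduct g).inv ≫ F.map p, ?_⟩
  rw [Category.assoc, ← Category.assoc (F.mapBiproduct g).hom, Iso.hom_inv_id,
    Category.id_comp, ← F.map_comp, hsp, F.map_id]

lemma CategoryTheory.Functor.map_mem_bracket (F : C ⥤ D) [F.Additive] [PreservesFiniteLimits F]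
    [PreservesFiniteColimits F] (T : C) :
    ∀ (n : ℕ) {X : C}, X ∈ bracket T n → F.obj X ∈ bracket (F.obj T) n
  | 0, _, hX => F.map_isZero hX
  | n + 1, _, hX => by
    refine F.map_mem_addClosure ?_ hX
    rintro M ⟨U, V, hU, hV, f, g, w, hfg⟩
    have hFU : F.obj U ∈ addClosure {F.obj T} :=
      F.map_mem_addClosure (by rintro _ rfl; rfl) hU
    exact ⟨F.obj U, F.obj V, hFU, F.map_mem_bracket T n hV, F.map f, F.map g,
      by rw [← F.map_comp, w, F.map_zero], hfg.map_of_exact F⟩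

lemma extDim_le_of_essSurj (F : C ⥤ D) [F.Additive] [PreservesFiniteLimits F]
    [PreservesFiniteColimits F] [F.EssSurj] : extDim D ≤ extDim C := by
  apply sInf_le_sInf
  rintro _ ⟨m, rfl, T, hT⟩
  exact ⟨m, rfl, F.obj T, fun Y => mem_bracket_succ_of_iso (F.objObjPreimageIso Y).symm
    (F.map_mem_bracket T (m + 1) (hT _))⟩

end

theorem extDim_le_of_retract_general
    {𝒜 : Type u} [Category.{v} 𝒜] [Abelian 𝒜]
    {ℬ : Type u'} [Category.{v'} ℬ] [Abelian ℬ]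
    (i : ℬ ⥤ 𝒜) (e : 𝒜 ⥤ ℬ)
    [e.Additive]
    [PreservesFiniteLimits e] [PreservesFiniteColimits e]
    (η : i ⋙ e ≅ 𝟭 ℬ) :
    extDim ℬ ≤ extDim 𝒜 :=
  have : e.EssSurj := ⟨fun X => ⟨i.obj X, ⟨η.app X⟩⟩⟩
  extDim_le_of_essSurj e

/-- Let `𝒜` and `ℬ` be abelian categories and `i : ℬ ⥤ 𝒜`, `e : 𝒜 ⥤ ℬ`
exact functors with a natural isomorphism `e ∘ i ≅ Id_ℬ`.  Then `dim ℬ ≤ dim 𝒜`. -/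
theorem extDim_le_of_retract
    {𝒜 : Type u} [Category.{v} 𝒜] [Abelian 𝒜]
    {ℬ : Type u'} [Category.{v'} ℬ] [Abelian ℬ]
    (i : ℬ ⥤ 𝒜) (e : 𝒜 ⥤ ℬ)
    [i.Additive] [e.Additive]
    [PreservesFiniteLimits i] [PreservesFiniteColimits i]
    [PreservesFiniteLimits e] [PreservesFiniteColimits e]
    (η : i ⋙ e ≅ 𝟭 ℬ) :
    extDim ℬ ≤ extDim 𝒜 :=
  extDim_le_of_retract_general i e η
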